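/- arXiv:1302.0110 — 2 statements merged into one kernel-verified Lean document; each statement's English description precedes it below -/
import Mathlib

section
/- Suppose for each x ∈ I₂, t ↦ φ_t^{-1}(x) is continuously differentiable on Θ with derivative ∂φ_t^{-1}(x), φ_t^{-1}∘φ_θ ∈ L²(ε) for all t, and for every compact B ⊂ Θ, E[sup_{t∈B} |∂φ_t^{-1}∘φ_θ(ε)|⁴] < ∞. Then M(t) = E[(φ_t^{-1}∘φ_θ(ε) − ε)²] is continuously differentiable on Θ with M'(t) = −2 E[∂φ_t^{-1}(X)(ε − φ_t^{-1}(X))], where X = φ_θ(ε). -/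
/-!
Differentiate under the integral sign. On a closed ball `B = closedBall t r ⊆ Θ`, put
`S = sup_{s ∈ B} |∂ψ_s(X)|`; the mean value theorem gives `|ψ_s(X) - ψ_t(X)| ≤ r S`, so
`|∂ψ_s(X)| |ψ_s(X) - ε| ≤ S (|ψ_t(X) - ε| + r S) ≤ (1 + r)(1 + S⁴) + (ψ_t(X) - ε)²`, an integrable
bound by the fourth-moment and `L²` assumptions. It dominates both the derivative of the integrand
of `M` and the integrand of `M'`, giving differentiability of `M` and continuity of `M'`.
Measurability of `∂ψ_s(X)` holds because it is an almost everywhere limit of difference quotients.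
-/

open MeasureTheory Set Filter Topology Metric

theorem aestronglyMeasurable_of_hasDerivAt {Ω E : Type*} [MeasurableSpace Ω] {μ : Measure Ω}
    [NormedAddCommGroup E] [NormedSpace ℝ E]
    {f : ℝ → Ω → E} {f' : Ω → E} {t : ℝ}
    (hf : ∀ᶠ s in 𝓝 t, AEStronglyMeasurable (f s) μ)
    (hderiv : ∀ᵐ ω ∂μ, HasDerivAt (f · ω) (f' ω) t) :
    AEStronglyMeasurable f' μ := by
  obtain ⟨u, hu, hu_meas⟩ :=
    exists_seq_forall_of_frequently (hf.filter_mono (nhdsWithin_le_nhds (s := {t}ᶜ))).frequently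
  refine aestronglyMeasurable_of_tendsto_ae atTop (fun n => ?_)
    (hderiv.mono fun ω h => (hasDerivAt_iff_tendsto_slope.mp h).comp hu)
  simp only [Function.comp_apply, slope_def_module]
  exact ((hu_meas n).sub hf.self_of_nhds).const_smul _

theorem norm_le_iSup_of_continuousOn {α E : Type*} [TopologicalSpace α] [SeminormedAddCommGroup E]
    {B : Set α} (hB : IsCompact B) {h : α → E} (hh : ContinuousOn h B) {s : α} (hs : s ∈ B) :
    ‖h s‖ ≤ ⨆ u : B, ‖h u‖ := by
  refine le_ciSup (f := fun u : B => ‖h u‖) ?_ ⟨s, hs⟩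
  rw [← image_eq_range (fun u => ‖h u‖) B]
  exact hB.bddAbove_image hh.norm

theorem mul_abs_add_mul_le {S a r : ℝ} (hr : 0 ≤ r) :
    S * (|a| + S * r) ≤ (1 + r) * (1 + S ^ 4) + a ^ 2 := by
  nlinarith [sq_nonneg (S - |a|), sq_nonneg (S ^ 2 - 1), mul_nonneg hr (sq_nonneg (S ^ 2 - 1)),
    sq_abs a, abs_nonneg a]

theorem abs_mul_abs_sub_le_of_mem_closedBall {g g' : ℝ → ℝ} {t r y : ℝ} (hr : 0 ≤ r)
    (hg : ∀ s ∈ closedBall t r, HasDerivAt g (g' s) s)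
    (hg' : ContinuousOn g' (closedBall t r)) {s : ℝ} (hs : s ∈ closedBall t r) :
    |g' s| * |g s - y| ≤ (1 + r) * (1 + (⨆ u : closedBall t r, |g' u|) ^ 4) + (g t - y) ^ 2 := by
  set S := ⨆ u : closedBall t r, |g' u|
  have hS : ∀ u ∈ closedBall t r, |g' u| ≤ S := fun u hu =>
    norm_le_iSup_of_continuousOn (isCompact_closedBall t r) hg' hu
  have ht : t ∈ closedBall t r := mem_closedBall_self hr
  have hS₀ : 0 ≤ S := (abs_nonneg _).trans (hS t ht)
  have hmvt : |g s - g t| ≤ S * r := by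
    refine ((convex_closedBall t r).norm_image_sub_le_of_norm_hasDerivWithin_le
      (fun u hu => (hg u hu).hasDerivWithinAt) hS ht hs).trans ?_
    exact (mul_le_mul_of_nonneg_left (mem_closedBall.mp hs) hS₀)
  calc |g' s| * |g s - y| ≤ S * (|g t - y| + S * r) := by
        refine mul_le_mul (hS s hs) ?_ (abs_nonneg _) hS₀
        linarith [abs_sub_le (g s) (g t) y]
    _ ≤ (1 + r) * (1 + S ^ 4) + (g t - y) ^ 2 := mul_abs_add_mul_le hr

section

variable {Ω : Type*} [MeasurableSpace Ω] {μ : Measure Ω} {Θ : Set ℝ} {g g' : ℝ → Ω → ℝ}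
  {Y : Ω → ℝ} {t : ℝ}

theorem exists_closedBall_integrable_bound [IsFiniteMeasure μ] (hΘ : IsOpen Θ) (ht : t ∈ Θ)
    (hgt : MemLp (g t) 2 μ) (hY : MemLp Y 2 μ)
    (hg : ∀ ω, ∀ s ∈ Θ, HasDerivAt (g · ω) (g' s ω) s) (hg' : ∀ ω, ContinuousOn (g' · ω) Θ)
    (hsup : ∀ B : Set ℝ, B ⊆ Θ → IsCompact B →
      Integrable (fun ω => (⨆ s : B, |g' s ω|) ^ 4) μ) :
    ∃ r > 0, closedBall t r ⊆ Θ ∧ ∃ bound : Ω → ℝ, Integrable bound μ ∧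
      ∀ ω, ∀ s ∈ closedBall t r, |g' s ω| * |g s ω - Y ω| ≤ bound ω := by
  obtain ⟨r, hr, hrΘ⟩ := nhds_basis_closedBall.mem_iff.mp (hΘ.mem_nhds ht)
  refine ⟨r, hr, hrΘ, _, ?_, fun ω s hs => abs_mul_abs_sub_le_of_mem_closedBall hr.le
    (fun u hu => hg ω u (hrΘ hu)) ((hg' ω).mono hrΘ) hs⟩
  exact (((integrable_const 1).add (hsup _ hrΘ (isCompact_closedBall t r))).const_mul _).add
    (hgt.sub hY).integrable_sq

theorem hasDerivAt_integral_sq_sub [IsFiniteMeasure μ] (hΘ : IsOpen Θ) (ht : t ∈ Θ)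
    (hg2 : ∀ s ∈ Θ, MemLp (g s) 2 μ) (hY : MemLp Y 2 μ)
    (hg : ∀ ω, ∀ s ∈ Θ, HasDerivAt (g · ω) (g' s ω) s) (hg' : ∀ ω, ContinuousOn (g' · ω) Θ)
    (hsup : ∀ B : Set ℝ, B ⊆ Θ → IsCompact B →
      Integrable (fun ω => (⨆ s : B, |g' s ω|) ^ 4) μ) :
    HasDerivAt (fun s => ∫ ω, (g s ω - Y ω) ^ 2 ∂μ)
      (-2 * ∫ ω, g' t ω * (Y ω - g t ω) ∂μ) t := by
  obtain ⟨r, hr, hrΘ, bound, hbound, hle⟩ :=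
    exists_closedBall_integrable_bound hΘ ht (hg2 t ht) hY hg hg' hsup
  have hg_meas : ∀ᶠ s in 𝓝 t, AEStronglyMeasurable (g s) μ :=
    eventually_of_mem (hΘ.mem_nhds ht) fun s hs => (hg2 s hs).aestronglyMeasurable
  have hg'_meas : AEStronglyMeasurable (g' t) μ :=
    aestronglyMeasurable_of_hasDerivAt hg_meas (ae_of_all _ fun ω => hg ω t ht)
  rw [← integral_const_mul]
  refine (hasDerivAt_integral_of_dominated_loc_of_deriv_le
    (F := fun s ω => (g s ω - Y ω) ^ 2) (F' := fun s ω => -2 * (g' s ω * (Y ω - g s ω)))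
    (ball_mem_nhds t hr)
    (hg_meas.mono fun s hs => (hs.sub hY.aestronglyMeasurable).pow 2)
    ((hg2 t ht).sub hY).integrable_sq
    ((hg'_meas.mul (hY.aestronglyMeasurable.sub (hg2 t ht).aestronglyMeasurable)).const_mul _)
    (ae_of_all _ fun ω s hs => ?_) (hbound.const_mul 2)
    (ae_of_all _ fun ω s hs => ?_)).2
  · simp only [norm_mul, norm_neg, Real.norm_eq_abs, abs_two, abs_sub_comm (Y ω)]
    linarith [hle ω s (ball_subset_closedBall hs)]
  · refine (((hg ω s (hrΘ (ball_subset_closedBall hs))).sub_const (Y ω)).fun_pow 2).congr_deriv ?_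
    push_cast
    ring

theorem continuousOn_integral_mul_sub [IsFiniteMeasure μ] (hΘ : IsOpen Θ)
    (hg2 : ∀ s ∈ Θ, MemLp (g s) 2 μ) (hY : MemLp Y 2 μ)
    (hg : ∀ ω, ∀ s ∈ Θ, HasDerivAt (g · ω) (g' s ω) s) (hg' : ∀ ω, ContinuousOn (g' · ω) Θ)
    (hsup : ∀ B : Set ℝ, B ⊆ Θ → IsCompact B →
      Integrable (fun ω => (⨆ s : B, |g' s ω|) ^ 4) μ) :
    ContinuousOn (fun s => ∫ ω, g' s ω * (Y ω - g s ω) ∂μ) Θ := by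
  intro t ht
  obtain ⟨r, hr, hrΘ, bound, hbound, hle⟩ :=
    exists_closedBall_integrable_bound hΘ ht (hg2 t ht) hY hg hg' hsup
  refine (continuousAt_of_dominated ?_ ?_ hbound (ae_of_all _ fun ω => ?_)).continuousWithinAt
  · filter_upwards [hΘ.mem_nhds ht] with s hs
    have hg_meas : ∀ᶠ u in 𝓝 s, AEStronglyMeasurable (g u) μ :=
      eventually_of_mem (hΘ.mem_nhds hs) fun u hu => (hg2 u hu).aestronglyMeasurable
    exact (aestronglyMeasurable_of_hasDerivAt hg_meas (ae_of_all _ fun ω => hg ω s hs)).mul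
      (hY.aestronglyMeasurable.sub (hg2 s hs).aestronglyMeasurable)
  · filter_upwards [closedBall_mem_nhds t hr] with s hs
    refine ae_of_all _ fun ω => ?_
    rw [Real.norm_eq_abs, abs_mul, abs_sub_comm]
    exact hle ω s hs
  · exact ((hg' ω).continuousAt (hΘ.mem_nhds ht)).mul
      (continuousAt_const.sub (hg ω t ht).continuousAt)

end

theorem M_continuously_differentiable_general
    {Ω : Type*} [MeasurableSpace Ω] (ℙ : Measure Ω) [IsProbabilityMeasure ℙ]
    (ε : Ω → ℝ)
    (Θ : Set ℝ) (hΘopen : IsOpen Θ) (θ : ℝ)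
    (φ ψ Dψ : ℝ → ℝ → ℝ)
    (hderiv : ∀ x : ℝ, ∀ s ∈ Θ, HasDerivAt (fun u => ψ u x) (Dψ s x) s)
    (hderiv_cont : ∀ x : ℝ, ContinuousOn (fun s => Dψ s x) Θ)
    (hL2 : ∀ s ∈ Θ, MemLp (fun ω => ψ s (φ θ (ε ω))) 2 ℙ) (hL2ε : MemLp ε 2 ℙ)
    (hsup4 : ∀ B : Set ℝ, B ⊆ Θ → IsCompact B →
      Integrable (fun ω => (⨆ s : B, |Dψ s (φ θ (ε ω))|) ^ 4) ℙ)
    (M M' : ℝ → ℝ)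
    (hM : ∀ s, M s = ∫ ω, (ψ s (φ θ (ε ω)) - ε ω) ^ 2 ∂ℙ)
    (hM' : ∀ s, M' s = -2 * ∫ ω, Dψ s (φ θ (ε ω)) * (ε ω - ψ s (φ θ (ε ω))) ∂ℙ) :
    (∀ t ∈ Θ, HasDerivAt M (M' t) t) ∧ ContinuousOn M' Θ := by
  obtain rfl : M = _ := funext hM
  obtain rfl : M' = _ := funext hM'
  have hψX : ∀ ω, ∀ s ∈ Θ, HasDerivAt (ψ · (φ θ (ε ω))) (Dψ s (φ θ (ε ω))) s :=
    fun ω => hderiv _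
  have hDψX : ∀ ω, ContinuousOn (Dψ · (φ θ (ε ω))) Θ := fun ω => hderiv_cont _
  exact ⟨fun t ht => hasDerivAt_integral_sq_sub hΘopen ht hL2 hL2ε hψX hDψX hsup4,
    continuousOn_const.mul (continuousOn_integral_mul_sub hΘopen hL2 hL2ε hψX hDψX hsup4)⟩

/-- `M` is continuously differentiable on `Θ` with
`M'(t) = -2 E[∂φ_t⁻¹(X)(ε - φ_t⁻¹(X))]`, where `X = φ_θ(ε)`. -/
theorem M_continuously_differentiable
    {Ω : Type*} [MeasurableSpace Ω] (ℙ : Measure Ω) [IsProbabilityMeasure ℙ]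
    (ε : Ω → ℝ) (hε : Measurable ε)
    (Θ : Set ℝ) (hΘopen : IsOpen Θ) (θ : ℝ) (hθ : θ ∈ Θ)
    (φ ψ Dψ : ℝ → ℝ → ℝ)
    (hψ : ∀ s ∈ Θ, ∀ x : ℝ, ψ s (φ s x) = x)
    (hderiv : ∀ x : ℝ, ∀ s ∈ Θ, HasDerivAt (fun u => ψ u x) (Dψ s x) s)
    (hderiv_cont : ∀ x : ℝ, ContinuousOn (fun s => Dψ s x) Θ)
    (hL2 : ∀ s ∈ Θ, MemLp (fun ω => ψ s (φ θ (ε ω))) 2 ℙ) (hL2ε : MemLp ε 2 ℙ)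
    (hsup4 : ∀ B : Set ℝ, B ⊆ Θ → IsCompact B →
      Integrable (fun ω => (⨆ s : B, |Dψ s (φ θ (ε ω))|) ^ 4) ℙ)
    (M M' : ℝ → ℝ)
    (hM : ∀ s, M s = ∫ ω, (ψ s (φ θ (ε ω)) - ε ω) ^ 2 ∂ℙ)
    (hM' : ∀ s, M' s = -2 * ∫ ω, Dψ s (φ θ (ε ω)) * (ε ω - ψ s (φ θ (ε ω))) ∂ℙ) :
    (∀ t ∈ Θ, HasDerivAt M (M' t) t) ∧ ContinuousOn M' Θ :=
  M_continuously_differentiable_general ℙ ε Θ hΘopen θ φ ψ Dψ hderiv hderiv_cont hL2 hL2ε hsup4 M M'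
    hM hM'
end

section
/- Let (v_n) be a nonnegative sequence with v_{n+1} ≤ v_n(1 + C₁/(n+1)² − 1/(n+1)) for all n ≥ 0, where C₁ > 0. Then for all n ≥ 0, v_n ≤ v₀ exp(C₁π²/6)/(n+1). -/
open Finset Real

lemma rm_sum_sq_le (n : ℕ) :
    ∑ k ∈ Finset.range n, (1 : ℝ) / ((k : ℝ) + 1) ^ 2 ≤ Real.pi ^ 2 / 6 := by
  have h := hasSum_zeta_two
  have h1 : ∑ k ∈ Finset.range (n + 1), (1 : ℝ) / (k : ℝ) ^ 2 ≤ Real.pi ^ 2 / 6 :=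
    sum_le_hasSum (Finset.range (n + 1)) (fun i _ => by positivity) h
  have h2 : ∑ k ∈ Finset.range n, (1 : ℝ) / ((k : ℝ) + 1) ^ 2
      = ∑ k ∈ Finset.range (n + 1), (1 : ℝ) / (k : ℝ) ^ 2 := by
    rw [Finset.sum_range_succ' (fun k => (1 : ℝ) / (k : ℝ) ^ 2) n]
    simp
  rw [h2]; exact h1

lemma rm_log_le_harmonic (n : ℕ) :
    Real.log ((n : ℝ) + 1) ≤ ∑ k ∈ Finset.range n, (1 : ℝ) / ((k : ℝ) + 1) := by
  have tel : ∑ k ∈ Finset.range n,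
      (Real.log ((k : ℝ) + 1 + 1) - Real.log ((k : ℝ) + 1)) = Real.log ((n : ℝ) + 1) := by
    have := Finset.sum_range_sub (fun k : ℕ => Real.log ((k : ℝ) + 1)) n
    simpa [Nat.cast_succ, add_assoc] using this
  rw [← tel]
  apply Finset.sum_le_sum
  intro k _
  have hk : (0 : ℝ) < (k : ℝ) + 1 := by positivity
  rw [← Real.log_div (by positivity) (by positivity)]
  have : ((k : ℝ) + 1 + 1) / ((k : ℝ) + 1) = 1 + 1 / ((k : ℝ) + 1) := by
    field_simp
  rw [this]
  have := Real.log_le_sub_one_of_pos (x := 1 + 1 / ((k : ℝ) + 1)) (by positivity)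
  linarith

/-- Quadratic mean bound for the Robbins–Monro recursion with step γ_n = 1/n. -/
theorem robbins_monro_quadratic_bound (v : ℕ → ℝ) (C₁ : ℝ) (hC₁ : 0 < C₁)
    (hvpos : ∀ n, 0 ≤ v n)
    (hrec : ∀ n : ℕ, v (n + 1) ≤
      v n * (1 + C₁ / ((n : ℝ) + 1) ^ 2 - 1 / ((n : ℝ) + 1))) :
    ∀ n : ℕ, v n ≤ v 0 * Real.exp (C₁ * Real.pi ^ 2 / 6) / ((n : ℝ) + 1) := by
  -- main induction
  have key : ∀ n : ℕ, v n ≤ v 0 * Real.exp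
      (∑ k ∈ Finset.range n, (C₁ / ((k : ℝ) + 1) ^ 2 - 1 / ((k : ℝ) + 1))) := by
    intro n
    induction n with
    | zero => simp
    | succ n ih =>
      have hfac : (0 : ℝ) ≤ 1 + C₁ / ((n : ℝ) + 1) ^ 2 - 1 / ((n : ℝ) + 1) := by
        have h1 : 1 / ((n : ℝ) + 1) ≤ 1 := by
          rw [div_le_one (by positivity)]; linarith [Nat.cast_nonneg (α := ℝ) n]
        have h2 : 0 < C₁ / ((n : ℝ) + 1) ^ 2 := by positivity
        linarith
      have hexp : 1 + C₁ / ((n : ℝ) + 1) ^ 2 - 1 / ((n : ℝ) + 1)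
          ≤ Real.exp (C₁ / ((n : ℝ) + 1) ^ 2 - 1 / ((n : ℝ) + 1)) := by
        have := Real.add_one_le_exp (C₁ / ((n : ℝ) + 1) ^ 2 - 1 / ((n : ℝ) + 1))
        linarith
      calc v (n + 1) ≤ v n * (1 + C₁ / ((n : ℝ) + 1) ^ 2 - 1 / ((n : ℝ) + 1)) := hrec n
        _ ≤ (v 0 * Real.exp (∑ k ∈ Finset.range n,
              (C₁ / ((k : ℝ) + 1) ^ 2 - 1 / ((k : ℝ) + 1))))
            * (1 + C₁ / ((n : ℝ) + 1) ^ 2 - 1 / ((n : ℝ) + 1)) :=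
          mul_le_mul_of_nonneg_right ih hfac
        _ ≤ (v 0 * Real.exp (∑ k ∈ Finset.range n,
              (C₁ / ((k : ℝ) + 1) ^ 2 - 1 / ((k : ℝ) + 1))))
            * Real.exp (C₁ / ((n : ℝ) + 1) ^ 2 - 1 / ((n : ℝ) + 1)) := by
          exact mul_le_mul_of_nonneg_left hexp
            (mul_nonneg (hvpos 0) (Real.exp_pos _).le)
        _ = v 0 * Real.exp (∑ k ∈ Finset.range (n + 1),
              (C₁ / ((k : ℝ) + 1) ^ 2 - 1 / ((k : ℝ) + 1))) := by
          rw [Finset.sum_range_succ, Real.exp_add, mul_assoc]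
  intro n
  have hsum : ∑ k ∈ Finset.range n, (C₁ / ((k : ℝ) + 1) ^ 2 - 1 / ((k : ℝ) + 1))
      ≤ C₁ * Real.pi ^ 2 / 6 - Real.log ((n : ℝ) + 1) := by
    rw [Finset.sum_sub_distrib]
    have h1 : ∑ k ∈ Finset.range n, C₁ / ((k : ℝ) + 1) ^ 2 ≤ C₁ * Real.pi ^ 2 / 6 := by
      have := rm_sum_sq_le n
      calc ∑ k ∈ Finset.range n, C₁ / ((k : ℝ) + 1) ^ 2
          = C₁ * ∑ k ∈ Finset.range n, (1 : ℝ) / ((k : ℝ) + 1) ^ 2 := by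
            rw [Finset.mul_sum]; congr 1; ext k; ring
        _ ≤ C₁ * (Real.pi ^ 2 / 6) := by
            exact mul_le_mul_of_nonneg_left this hC₁.le
        _ = C₁ * Real.pi ^ 2 / 6 := by ring
    have h2 := rm_log_le_harmonic n
    linarith
  have hmono := Real.exp_le_exp.mpr hsum
  have hfinal : v 0 * Real.exp (∑ k ∈ Finset.range n,
      (C₁ / ((k : ℝ) + 1) ^ 2 - 1 / ((k : ℝ) + 1)))
      ≤ v 0 * Real.exp (C₁ * Real.pi ^ 2 / 6 - Real.log ((n : ℝ) + 1)) :=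
    mul_le_mul_of_nonneg_left hmono (hvpos 0)
  have heq : Real.exp (C₁ * Real.pi ^ 2 / 6 - Real.log ((n : ℝ) + 1))
      = Real.exp (C₁ * Real.pi ^ 2 / 6) / ((n : ℝ) + 1) := by
    rw [Real.exp_sub, Real.exp_log (by positivity)]
  calc v n ≤ _ := key n
    _ ≤ v 0 * Real.exp (C₁ * Real.pi ^ 2 / 6 - Real.log ((n : ℝ) + 1)) := hfinal
    _ = v 0 * Real.exp (C₁ * Real.pi ^ 2 / 6) / ((n : ℝ) + 1) := by
      rw [heq]; ring
end
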